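/- (Semigroup-type property of the 1-d wave kernel) Let G_t(x) = (1/2)·1_{|x|<t} for d = 1. Then for any 0 < r < t and x, z ∈ ℝ, ∫_r^t ∫_ℝ G_{t−s}(x−y) G_{s−r}(y−z) dy ds ≤ C t² G_{t−r}(x−z) for some absolute constant C > 0. -/

import Mathlib

open MeasureTheory

/-- The fundamental solution of the one-dimensional wave equation. -/
noncomputable def waveKernel (t x : ℝ) : ℝ := if |x| < t then 1 / 2 else 0

/-!
Both kernels are bounded by `1/2` and `G_a(x - ·)` has total mass `a`, so the inner integral is
at most `(t - s)/2`, and the whole double integral at most `(t - r)²/4`. By the triangle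
inequality the integrand vanishes identically unless `|x - z| < t - r`, which is exactly where
`G_{t-r}(x - z) = 1/2`.
-/

lemma waveKernel_nonneg (t x : ℝ) : 0 ≤ waveKernel t x := by
  unfold waveKernel; split <;> norm_num

lemma waveKernel_le_half (t x : ℝ) : waveKernel t x ≤ 1 / 2 := by
  unfold waveKernel; split <;> norm_num

lemma waveKernel_sub_eq_indicator (a x : ℝ) :
    (fun y => waveKernel a (x - y)) = (Set.Ioo (x - a) (x + a)).indicator fun _ => 1 / 2 := by
  funext y
  have hmem : |x - y| < a ↔ y ∈ Set.Ioo (x - a) (x + a) := by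
    rw [Set.mem_Ioo, abs_lt]
    constructor <;> rintro ⟨h₁, h₂⟩ <;> constructor <;> linarith
  simp only [waveKernel, Set.indicator_apply, hmem]

lemma integrable_waveKernel_sub (a x : ℝ) : Integrable fun y => waveKernel a (x - y) := by
  rw [waveKernel_sub_eq_indicator, integrable_indicator_iff measurableSet_Ioo]
  exact integrableOn_const measure_Ioo_lt_top.ne

lemma integral_waveKernel_sub {a : ℝ} (ha : 0 ≤ a) (x : ℝ) :
    ∫ y, waveKernel a (x - y) = a := by
  rw [waveKernel_sub_eq_indicator, integral_indicator_const _ measurableSet_Ioo,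
    Real.volume_real_Ioo, max_eq_left (by linarith), smul_eq_mul]
  ring

lemma integral_waveKernel_mul_le {a : ℝ} (ha : 0 ≤ a) (b x z : ℝ) :
    ∫ y, waveKernel a (x - y) * waveKernel b (y - z) ≤ a / 2 :=
  calc ∫ y, waveKernel a (x - y) * waveKernel b (y - z)
      ≤ ∫ y, waveKernel a (x - y) * (1 / 2) :=
        integral_mono_of_nonneg
          (ae_of_all _ fun _ => mul_nonneg (waveKernel_nonneg _ _) (waveKernel_nonneg _ _))
          ((integrable_waveKernel_sub a x).mul_const _)
          (ae_of_all _ fun _ =>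
            mul_le_mul_of_nonneg_left (waveKernel_le_half _ _) (waveKernel_nonneg _ _))
    _ = a / 2 := by rw [integral_mul_const, integral_waveKernel_sub ha]; ring

lemma waveKernel_mul_eq_zero_of_le {a b x y z : ℝ} (h : a + b ≤ |x - z|) :
    waveKernel a (x - y) * waveKernel b (y - z) = 0 := by
  unfold waveKernel
  split_ifs with h₁ h₂ <;> try simp
  linarith [abs_sub_le x y z]

lemma integral_waveKernel_conv_le_sq {r t : ℝ} (hrt : r ≤ t) (x z : ℝ) :
    ∫ s in r..t, ∫ y, waveKernel (t - s) (x - y) * waveKernel (s - r) (y - z) ≤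
      (t - r) ^ 2 / 4 := by
  rw [intervalIntegral.integral_of_le hrt]
  calc ∫ s in Set.Ioc r t, ∫ y, waveKernel (t - s) (x - y) * waveKernel (s - r) (y - z)
      ≤ ∫ s in Set.Ioc r t, (t - s) / 2 := by
        refine integral_mono_of_nonneg
          (ae_of_all _ fun _ => integral_nonneg fun _ =>
            mul_nonneg (waveKernel_nonneg _ _) (waveKernel_nonneg _ _))
          (Continuous.integrableOn_Ioc (by fun_prop)) ?_
        filter_upwards [ae_restrict_mem measurableSet_Ioc] with s hs
        exact integral_waveKernel_mul_le (by linarith [hs.2]) _ _ _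
    _ = (t - r) ^ 2 / 4 := by
        rw [← intervalIntegral.integral_of_le hrt,
          intervalIntegral.integral_comp_sub_left (fun u => u / 2) t, intervalIntegral.integral_div,
          integral_id]
        ring

lemma integral_waveKernel_conv_le {r t : ℝ} (hrt : r ≤ t) (x z : ℝ) :
    ∫ s in r..t, ∫ y, waveKernel (t - s) (x - y) * waveKernel (s - r) (y - z) ≤
      (t - r) ^ 2 / 2 * waveKernel (t - r) (x - z) := by
  by_cases hxz : |x - z| < t - r
  · rw [waveKernel, if_pos hxz]
    linarith [integral_waveKernel_conv_le_sq hrt x z]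
  · have hzero : ∀ s y, waveKernel (t - s) (x - y) * waveKernel (s - r) (y - z) = 0 :=
      fun _ _ => waveKernel_mul_eq_zero_of_le (by linarith)
    rw [waveKernel, if_neg hxz]
    simp [hzero]

theorem stmt_17 :
    ∃ C : ℝ, 0 < C ∧ ∀ r t x z : ℝ, 0 < r → r < t →
      (∫ s in r..t, ∫ y : ℝ, waveKernel (t - s) (x - y) * waveKernel (s - r) (y - z)) ≤
        C * t ^ 2 * waveKernel (t - r) (x - z) := by
  refine ⟨1 / 2, by norm_num, fun r t x z hr hrt => ?_⟩
  have hsq : (t - r) ^ 2 / 2 ≤ 1 / 2 * t ^ 2 := by nlinarith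
  calc _ ≤ (t - r) ^ 2 / 2 * waveKernel (t - r) (x - z) := integral_waveKernel_conv_le hrt.le x z
    _ ≤ 1 / 2 * t ^ 2 * waveKernel (t - r) (x - z) :=
        mul_le_mul_of_nonneg_right hsq (waveKernel_nonneg _ _)
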